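/- arXiv:1003.4845 — 3 statements merged into one kernel-verified Lean document; each statement's English description precedes it below -/
import Mathlib

section
/- Let f : ℝ → ℝ be continuous and nonnegative, and y : ℝ → ℝ be differentiable and nonnegative, satisfying y'(t) ≤ 2 f(t) √(y(t)) for all t ∈ ℝ. Then for all t ≥ 0, √(y(t)) ≤ √(y(0)) + ∫₀ᵗ f(s) ds. -/
/-!
On `{y > 0}` the inequality says `(√y)' ≤ f`, and integrating gives the claim. To avoid the
points where `y` vanishes and `√` is not differentiable, run the argument for `√(y + ε)`,
whose derivative `y' / (2√(y + ε))` is still at most `f`, and let `ε → 0⁺`.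
-/

open Real Set Filter Topology MeasureTheory intervalIntegral

lemma div_two_sqrt_add_le {d c a ε : ℝ} (hc : 0 ≤ c) (ha : 0 ≤ a) (hε : 0 < ε)
    (hd : d ≤ 2 * c * √a) : d / (2 * √(a + ε)) ≤ c := by
  have hpos : 0 < 2 * √(a + ε) := by positivity
  rw [div_le_iff₀ hpos]
  calc d ≤ 2 * c * √a := hd
    _ ≤ 2 * c * √(a + ε) := by gcongr; linarith
    _ = c * (2 * √(a + ε)) := by ring

lemma sqrt_add_sub_sqrt_add_le_integral {f y : ℝ → ℝ} {a b ε : ℝ} (hab : a ≤ b) (hε : 0 < ε)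
    (hf : IntegrableOn f (Icc a b)) (hf0 : ∀ t, 0 ≤ f t)
    (hy : Differentiable ℝ y) (hy0 : ∀ t, 0 ≤ y t)
    (hineq : ∀ t, deriv y t ≤ 2 * f t * √(y t)) :
    √(y b + ε) - √(y a + ε) ≤ ∫ s in a..b, f s := by
  have hderiv : ∀ t, HasDerivAt (fun s => √(y s + ε)) (deriv y t / (2 * √(y t + ε))) t :=
    fun t => ((hy t).hasDerivAt.add_const ε).sqrt (by linarith [hy0 t])
  exact sub_le_integral_of_hasDeriv_right_of_le hab
    (fun t _ => (hderiv t).continuousAt.continuousWithinAt)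
    (fun t _ => (hderiv t).hasDerivWithinAt) hf
    (fun t _ => div_two_sqrt_add_le (hf0 t) (hy0 t) hε (hineq t))

theorem stmt0 (f y : ℝ → ℝ) (hf : Continuous f) (hf0 : ∀ t, 0 ≤ f t)
    (hy : Differentiable ℝ y) (hy0 : ∀ t, 0 ≤ y t)
    (hineq : ∀ t, deriv y t ≤ 2 * f t * Real.sqrt (y t)) :
    ∀ t, 0 ≤ t → Real.sqrt (y t) ≤ Real.sqrt (y 0) + ∫ s in (0:ℝ)..t, f s := by
  intro t ht
  have hbound : ∀ ε > 0, √(y t) ≤ √(y 0 + ε) + ∫ s in (0:ℝ)..t, f s := fun ε hε => by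
    have := sqrt_add_sub_sqrt_add_le_integral ht hε hf.integrableOn_Icc hf0 hy hy0 hineq
    have : √(y t) ≤ √(y t + ε) := sqrt_le_sqrt (by linarith)
    linarith
  have hlim : Tendsto (fun ε => √(y 0 + ε) + ∫ s in (0:ℝ)..t, f s) (𝓝[>] 0)
      (𝓝 (√(y 0) + ∫ s in (0:ℝ)..t, f s)) := by
    have : Continuous fun ε => √(y 0 + ε) + ∫ s in (0:ℝ)..t, f s := by fun_prop
    simpa using (this.tendsto 0).mono_left nhdsWithin_le_nhds
  exact ge_of_tendsto hlim (eventually_nhdsWithin_of_forall hbound)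
end

section
/- Let k ≥ 2, ρ > 0, and let P(z) = ∑_{𝐣 ∈ ℐ_k} a_𝐣 z_{j_1}⋯z_{j_k} be a homogeneous polynomial of degree k with zero-momentum monomials and ‖P‖ = sup_𝐣 |a_𝐣| < ∞. Then for all z with ‖z‖_ρ = ∑_{j ∈ 𝒵} e^{ρ|j|}|z_j| < ∞, the Hamiltonian vector field satisfies ‖X_P(z)‖_ρ ≤ 2k ‖P‖ ‖z‖_ρ^{k-1}. -/
/-- The index set is 𝒵 = ℤᵈ × {±1}; the Bool encodes the sign δ (true = +1). -/
abbrev Zidx (d : ℕ) := (Fin d → ℤ) × Bool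

/-- Euclidean norm |j| = |a| of an index j = (a,δ). -/
noncomputable def znorm {d : ℕ} (j : Zidx d) : ℝ :=
  Real.sqrt (∑ i, ((j.1 i : ℝ)) ^ 2)

/-- Momentum ℳ(𝐣) = ∑ δᵢ aᵢ of a multi-index 𝐣. -/
def mom {d k : ℕ} (j : Fin k → Zidx d) : Fin d → ℤ :=
  ∑ i, (if (j i).2 then (1 : ℤ) else -1) • (j i).1

open scoped Classical in
/-- The formal partial derivative ∂P/∂z_m of P(z) = ∑_𝐣 a_𝐣 z_{j₁}⋯z_{j_k},
evaluated at z. -/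
noncomputable def formalDeriv {d k : ℕ}
    (a : (Fin k → Zidx d) → ℂ) (z : Zidx d → ℂ) (m : Zidx d) : ℂ :=
  ∑' j : Fin k → Zidx d,
    a j * ∑ i, (if j i = m then ∏ i' ∈ Finset.univ.erase i, z (j i') else 0)

/-!
Expanding `∂P/∂z_m` and summing over `m` against `e^{ρ|m|}` turns the left-hand side into
`∑_i ∑_𝐣 |a_𝐣| e^{ρ|j_i|} ∏_{i' ≠ i} |z_{j_{i'}}|`. For a zero-momentum `𝐣` the vectors `±a_{i'}`
sum to zero, so `|j_i| ≤ ∑_{i' ≠ i} |j_{i'}|` and `e^{ρ|j_i|} ≤ ∏_{i' ≠ i} e^{ρ|j_{i'}|}`.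
Moreover such a `𝐣` is determined by its entries off `i` together with the sign of `j_i`, so the
sum over `𝐣` is at most twice `‖z‖_ρ^{k-1}`; the `k` choices of `i` give the factor `k`.
All estimates are carried out in `ℝ≥0∞`, where sums can be interchanged freely; summability of
the real series is then a consequence of the bound.
-/

open Finset
open scoped ENNReal

namespace ENNReal

theorem tsum_fin_pi_prod {α : Type*} (F : α → ℝ≥0∞) (n : ℕ) :
    ∑' g : Fin n → α, ∏ i, F (g i) = (∑' x, F x) ^ n := by
  induction n with
  | zero => simp
  | succ n ih =>
    rw [← (Fin.consEquiv fun _ => α).tsum_eq, ENNReal.tsum_prod', pow_succ', ← ih,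
      ← ENNReal.tsum_mul_right]
    refine tsum_congr fun x => ?_
    rw [← ENNReal.tsum_mul_left]
    simp [Fin.prod_univ_succ]

theorem tsum_pi_prod {ι α : Type*} [Fintype ι] (F : α → ℝ≥0∞) :
    ∑' g : ι → α, ∏ i, F (g i) = (∑' x, F x) ^ Fintype.card ι := by
  let e := Fintype.equivFin ι
  rw [← tsum_fin_pi_prod, ← (Equiv.arrowCongr e.symm (Equiv.refl α)).tsum_eq]
  exact tsum_congr fun g => Fintype.prod_equiv e _ _ fun i => by simp

end ENNReal

theorem norm_le_sum_erase_norm_of_sum_eq_zero {ι E : Type*} [Fintype ι] [DecidableEq ι]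
    [SeminormedAddCommGroup E] {v : ι → E} (hv : ∑ i, v i = 0) (i : ι) :
    ‖v i‖ ≤ ∑ i' ∈ univ.erase i, ‖v i'‖ := by
  have hvi : v i = -∑ i' ∈ univ.erase i, v i' :=
    eq_neg_of_add_eq_zero_left <| (add_sum_erase _ v (mem_univ i)).trans hv
  rw [hvi, norm_neg]
  exact norm_sum_le _ _

theorem summable_and_tsum_le_of_tsum_ofReal_le {ι : Type*} {f : ι → ℝ} {C : ℝ}
    (hf : ∀ i, 0 ≤ f i) (hC : 0 ≤ C) (h : ∑' i, ENNReal.ofReal (f i) ≤ ENNReal.ofReal C) :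
    Summable f ∧ ∑' i, f i ≤ C := by
  have hs : Summable f := by
    simpa [ENNReal.toReal_ofReal (hf _)] using
      ENNReal.summable_toReal (ne_top_of_le_ne_top ENNReal.ofReal_ne_top h)
  refine ⟨hs, (ENNReal.ofReal_le_ofReal_iff hC).mp ?_⟩
  rwa [ENNReal.ofReal_tsum_of_nonneg hf hs]

variable {d k : ℕ}

noncomputable def intVec (d : ℕ) : (Fin d → ℤ) →+ EuclideanSpace ℝ (Fin d) where
  toFun v := WithLp.toLp 2 fun t => (v t : ℝ)
  map_zero' := by ext; simp
  map_add' v w := by ext; simp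

theorem znorm_eq_norm_intVec (x : Zidx d) : znorm x = ‖intVec d x.1‖ := by
  simp [znorm, EuclideanSpace.norm_eq, intVec, sq_abs]

theorem znorm_le_sum_erase_of_mom_eq_zero {j : Fin k → Zidx d} (hj : mom j = 0) (i : Fin k) :
    znorm (j i) ≤ ∑ i' ∈ univ.erase i, znorm (j i') := by
  have hsign : ∀ x : Zidx d, ‖(if x.2 then (1 : ℤ) else -1) • intVec d x.1‖ = znorm x := by
    intro x; cases x.2 <;> simp [znorm_eq_norm_intVec]
  have hsum : ∑ i', (if (j i').2 then (1 : ℤ) else -1) • intVec d (j i').1 = 0 := by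
    simp_rw [← map_zsmul, ← map_sum]
    rw [← mom, hj, map_zero]
  simpa only [hsign] using norm_le_sum_erase_norm_of_sum_eq_zero hsum i

theorem eq_of_mom_eq_zero_of_eq_off {j j' : Fin k → Zidx d} (hj : mom j = 0) (hj' : mom j' = 0)
    {i : Fin k} (hoff : ∀ i' ≠ i, j i' = j' i') (hsign : (j i).2 = (j' i).2) : j = j' := by
  have hi : (if (j i).2 then (1 : ℤ) else -1) • (j i).1 =
      (if (j' i).2 then (1 : ℤ) else -1) • (j' i).1 := by
    have hdiff : mom j - mom j' = 0 := by rw [hj, hj', sub_zero]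
    rwa [mom, mom, ← sum_sub_distrib, sum_eq_single i (fun i' _ h => by rw [hoff i' h, sub_self])
      (by simp), sub_eq_zero] at hdiff
  have hfst : (j i).1 = (j' i).1 := by
    rw [hsign] at hi
    cases h : (j' i).2 <;> simpa [h] using hi
  funext i'
  by_cases h : i' = i
  · subst h; exact Prod.ext hfst hsign
  · exact hoff i' h

theorem tsum_ite_mom_eq_zero_prod_erase_le (W : Zidx d → ℝ≥0∞) (i : Fin k) :
    ∑' j : Fin k → Zidx d, (if mom j = 0 then ∏ i' ∈ univ.erase i, W (j i') else 0) ≤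
      2 * (∑' x, W x) ^ (k - 1) := by
  let restrict : {j : Fin k → Zidx d | mom j = 0} → ({i' // i' ≠ i} → Zidx d) × Bool :=
    fun j => (fun i' => j.1 i', (j.1 i).2)
  have hinj : Function.Injective restrict := fun j j' h => Subtype.ext <|
    eq_of_mom_eq_zero_of_eq_off (i := i) j.2 j'.2
      (fun i' hi' => congrFun (Prod.ext_iff.mp h).1 ⟨i', hi'⟩) (Prod.ext_iff.mp h).2
  calc ∑' j : Fin k → Zidx d, (if mom j = 0 then ∏ i' ∈ univ.erase i, W (j i') else 0)
      = ∑' j : {j : Fin k → Zidx d | mom j = 0}, ∏ i' ∈ univ.erase i, W (j.1 i') := by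
        rw [_root_.tsum_subtype {j | mom j = 0} fun j => ∏ i' ∈ univ.erase i, W (j i')]
        exact tsum_congr fun j => by simp [Set.indicator_apply]
    _ = ∑' j : {j : Fin k → Zidx d | mom j = 0}, ∏ i', W ((restrict j).1 i') :=
        tsum_congr fun j => prod_subtype (univ.erase i) (fun i' => by simp) (fun i' => W (j.1 i'))
    _ ≤ ∑' p : ({i' // i' ≠ i} → Zidx d) × Bool, ∏ i', W (p.1 i') :=
        ENNReal.tsum_comp_le_tsum_of_injective hinj (fun p => ∏ i', W (p.1 i'))
    _ = 2 * (∑' x, W x) ^ (k - 1) := by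
        rw [ENNReal.tsum_prod']
        simp_rw [tsum_fintype, Fintype.sum_bool, ← two_mul]
        rw [ENNReal.tsum_mul_left, ENNReal.tsum_pi_prod]
        simp

noncomputable def expWeight (ρ : ℝ) (x : Zidx d) : ℝ≥0∞ := ENNReal.ofReal (Real.exp (ρ * znorm x))

theorem ofReal_exp_mul_norm (ρ : ℝ) (x : Zidx d) (v : ℂ) :
    ENNReal.ofReal (Real.exp (ρ * znorm x) * ‖v‖) = expWeight ρ x * ‖v‖ₑ := by
  rw [ENNReal.ofReal_mul (Real.exp_pos _).le, ofReal_norm, expWeight]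

theorem expWeight_le_prod_erase_of_mom_eq_zero {ρ : ℝ} (hρ : 0 ≤ ρ) {j : Fin k → Zidx d}
    (hj : mom j = 0) (i : Fin k) :
    expWeight ρ (j i) ≤ ∏ i' ∈ univ.erase i, expWeight ρ (j i') := by
  simp only [expWeight]
  rw [← ENNReal.ofReal_prod_of_nonneg fun _ _ => (Real.exp_pos _).le,
    ← Real.exp_sum, ← mul_sum]
  gcongr
  exact znorm_le_sum_erase_of_mom_eq_zero hj i

theorem enorm_formalDeriv_le (a : (Fin k → Zidx d) → ℂ) (z : Zidx d → ℂ) (m : Zidx d) :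
    ‖formalDeriv a z m‖ₑ ≤
      ∑' j, ∑ i, if j i = m then ‖a j‖ₑ * ∏ i' ∈ univ.erase i, ‖z (j i')‖ₑ else 0 := by
  refine enorm_tsum_le_tsum_enorm.trans (ENNReal.tsum_le_tsum fun j => ?_)
  rw [enorm_mul]
  calc ‖a j‖ₑ * ‖∑ i, if j i = m then ∏ i' ∈ univ.erase i, z (j i') else 0‖ₑ
      ≤ ‖a j‖ₑ * ∑ i, ‖if j i = m then ∏ i' ∈ univ.erase i, z (j i') else 0‖ₑ := by
        gcongr
        exact enorm_sum_le _ _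
    _ = _ := by
        rw [mul_sum]
        refine sum_congr rfl fun i _ => ?_
        split_ifs <;> simp [enorm_eq_nnnorm, nnnorm_prod]

theorem enorm_mul_expWeight_le {ρ : ℝ} (hρ : 0 ≤ ρ) {a : (Fin k → Zidx d) → ℂ} {Pn : ℝ}
    (hmom : ∀ j, a j ≠ 0 → mom j = 0) (hbd : ∀ j, ‖a j‖ ≤ Pn) (z : Zidx d → ℂ)
    (j : Fin k → Zidx d) (i : Fin k) :
    ‖a j‖ₑ * (expWeight ρ (j i) * ∏ i' ∈ univ.erase i, ‖z (j i')‖ₑ) ≤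
      ENNReal.ofReal Pn *
        if mom j = 0 then ∏ i' ∈ univ.erase i, expWeight ρ (j i') * ‖z (j i')‖ₑ else 0 := by
  by_cases ha : a j = 0
  · simp [ha]
  have hj := hmom j ha
  rw [if_pos hj, prod_mul_distrib]
  gcongr
  · rw [← ofReal_norm]
    exact ENNReal.ofReal_le_ofReal (hbd j)
  · exact expWeight_le_prod_erase_of_mom_eq_zero hρ hj i

theorem tsum_expWeight_mul_enorm_formalDeriv_le {ρ : ℝ} (hρ : 0 ≤ ρ)
    {a : (Fin k → Zidx d) → ℂ} {Pn : ℝ}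
    (hmom : ∀ j, a j ≠ 0 → mom j = 0) (hbd : ∀ j, ‖a j‖ ≤ Pn) (z : Zidx d → ℂ) :
    ∑' m, expWeight ρ m * ‖formalDeriv a z m‖ₑ ≤
      2 * k * ENNReal.ofReal Pn * (∑' x, expWeight ρ x * ‖z x‖ₑ) ^ (k - 1) := by
  set W : Zidx d → ℝ≥0∞ := fun x => expWeight ρ x * ‖z x‖ₑ
  calc ∑' m, expWeight ρ m * ‖formalDeriv a z m‖ₑ
      ≤ ∑' m, ∑' j, ∑ i, if j i = m then
          ‖a j‖ₑ * (expWeight ρ (j i) * ∏ i' ∈ univ.erase i, ‖z (j i')‖ₑ) else 0 := by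
        refine ENNReal.tsum_le_tsum fun m => ?_
        grw [enorm_formalDeriv_le a z m]
        rw [← ENNReal.tsum_mul_left]
        refine le_of_eq (tsum_congr fun j => ?_)
        rw [mul_sum]
        refine sum_congr rfl fun i _ => ?_
        split_ifs with h
        · rw [h]; ring
        · rw [mul_zero]
    _ = ∑' j, ∑ i, ‖a j‖ₑ * (expWeight ρ (j i) * ∏ i' ∈ univ.erase i, ‖z (j i')‖ₑ) := by
        rw [ENNReal.tsum_comm]
        refine tsum_congr fun j => ?_
        rw [Summable.tsum_finsetSum fun _ _ => ENNReal.summable]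
        exact sum_congr rfl fun i _ => tsum_ite_eq' _ _
    _ ≤ ∑' j, ∑ i, ENNReal.ofReal Pn *
          if mom j = 0 then ∏ i' ∈ univ.erase i, W (j i') else 0 :=
        ENNReal.tsum_le_tsum fun j => sum_le_sum fun i _ =>
          enorm_mul_expWeight_le hρ hmom hbd z j i
    _ = ENNReal.ofReal Pn * ∑ i : Fin k, ∑' j,
          if mom j = 0 then ∏ i' ∈ univ.erase i, W (j i') else 0 := by
        simp_rw [← mul_sum, ENNReal.tsum_mul_left,
          Summable.tsum_finsetSum fun _ _ => ENNReal.summable]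
    _ ≤ ENNReal.ofReal Pn * ∑ _i : Fin k, 2 * (∑' x, W x) ^ (k - 1) := by
        gcongr with i
        exact tsum_ite_mom_eq_zero_prod_erase_le W i
    _ = 2 * k * ENNReal.ofReal Pn * (∑' x, W x) ^ (k - 1) := by
        rw [sum_const, card_univ, Fintype.card_fin, nsmul_eq_mul]
        ring

theorem stmt5_general (d k : ℕ) (ρ : ℝ) (hρ : 0 < ρ)
    (a : (Fin k → Zidx d) → ℂ) (Pn : ℝ)
    (hmom : ∀ j, a j ≠ 0 → mom j = 0)
    (hbd : ∀ j, ‖a j‖ ≤ Pn)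
    (z : Zidx d → ℂ)
    (hz : Summable fun j : Zidx d => Real.exp (ρ * znorm j) * ‖z j‖) :
    Summable (fun m : Zidx d => Real.exp (ρ * znorm m) * ‖formalDeriv a z m‖) ∧
    ∑' m : Zidx d, Real.exp (ρ * znorm m) * ‖formalDeriv a z m‖ ≤
      2 * k * Pn * (∑' j : Zidx d, Real.exp (ρ * znorm j) * ‖z j‖) ^ (k - 1) := by
  have hPn : 0 ≤ Pn := (norm_nonneg _).trans (hbd default)
  have hS : ∑' x, expWeight ρ x * ‖z x‖ₑ =
      ENNReal.ofReal (∑' j : Zidx d, Real.exp (ρ * znorm j) * ‖z j‖) := by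
    rw [ENNReal.ofReal_tsum_of_nonneg (fun _ => by positivity) hz]
    simp only [ofReal_exp_mul_norm]
  have hS0 : 0 ≤ ∑' j : Zidx d, Real.exp (ρ * znorm j) * ‖z j‖ :=
    tsum_nonneg fun _ => by positivity
  refine summable_and_tsum_le_of_tsum_ofReal_le (fun _ => by positivity) (by positivity) ?_
  simp only [ofReal_exp_mul_norm]
  refine (tsum_expWeight_mul_enorm_formalDeriv_le hρ.le hmom hbd z).trans_eq ?_
  rw [hS, ENNReal.ofReal_mul (by positivity), ENNReal.ofReal_mul (by positivity),
    ENNReal.ofReal_pow hS0]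
  simp

theorem stmt5 (d k : ℕ) (hk : 2 ≤ k) (ρ : ℝ) (hρ : 0 < ρ)
    (a : (Fin k → Zidx d) → ℂ) (Pn : ℝ)
    (hmom : ∀ j, a j ≠ 0 → mom j = 0)
    (hbd : ∀ j, ‖a j‖ ≤ Pn)
    (z : Zidx d → ℂ)
    (hz : Summable fun j : Zidx d => Real.exp (ρ * znorm j) * ‖z j‖) :
    Summable (fun m : Zidx d => Real.exp (ρ * znorm m) * ‖formalDeriv a z m‖) ∧
    ∑' m : Zidx d, Real.exp (ρ * znorm m) * ‖formalDeriv a z m‖ ≤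
      2 * k * Pn * (∑' j : Zidx d, Real.exp (ρ * znorm j) * ‖z j‖) ^ (k - 1) :=
  stmt5_general d k ρ hρ a Pn hmom hbd z hz
end

section
/- Let P and Q be homogeneous polynomials of degrees k and ℓ respectively on ℂ^{ℤᵈ×{±1}}, both with only zero-momentum monomials and bounded coefficients with norms ‖P‖ = sup|a_𝐤| and ‖Q‖ = sup|b_𝐥|. Then the Poisson bracket {P,Q} = i ∑_{a ∈ ℤᵈ} (∂P/∂η_a ∂Q/∂ξ_a − ∂P/∂ξ_a ∂Q/∂η_a) is a homogeneous polynomial of degree k + ℓ − 2 with zero-momentum monomials and ‖{P,Q}‖ ≤ 2 k ℓ ‖P‖ ‖Q‖. -/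
/-- Poisson bracket {P,Q}(z) = i ∑_a (∂P/∂η_a ∂Q/∂ξ_a − ∂P/∂ξ_a ∂Q/∂η_a),
where ξ_a = z_{(a,+1)} and η_a = z_{(a,-1)}. -/
noncomputable def poissonBracket {d k l : ℕ}
    (a : (Fin k → Zidx d) → ℂ) (b : (Fin l → Zidx d) → ℂ)
    (z : Zidx d → ℂ) : ℂ :=
  Complex.I * ∑' c : Fin d → ℤ,
    (formalDeriv a z (c, false) * formalDeriv b z (c, true) -
      formalDeriv a z (c, true) * formalDeriv b z (c, false))

/-!
Differentiating `P = ∑ a_𝐣 z_𝐣` in `z_m` and deleting the variable gives a polynomial of degree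
`k - 1` whose coefficient at `r` is `∑ᵢ a (insertNth i m r)`, a sum of `k` coefficients of `P`.
By zero momentum, `∂P/∂η_c` can only have a nonzero coefficient at `r` when `c = ℳ(r)`, and
`∂P/∂ξ_c` only when `c = -ℳ(r)`. Hence, for each pair of monomials `(r, s)` of `∂P` and `∂Q`,
the sum over `c ∈ ℤᵈ` in the bracket has a single surviving term, of size at most `2kℓ‖P‖‖Q‖`,
and zero momentum of `Q` then forces `ℳ(r) + ℳ(s) = 0`.
-/

open Finset

section FinitelySupported

variable {ι α M : Type*} [Fintype ι] [DecidableEq ι] [CommSemiring M] {z : α → M} {S : Finset α}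

theorem prod_apply_eq_zero_of_notMem_piFinset (hS : ∀ x, z x ≠ 0 → x ∈ S) {j : ι → α}
    (hj : j ∉ Fintype.piFinset fun _ => S) : ∏ i, z (j i) = 0 := by
  rw [Fintype.mem_piFinset, not_forall] at hj
  obtain ⟨i, hi⟩ := hj
  exact prod_eq_zero (mem_univ i) (not_not.1 (mt (hS _) hi))

variable [TopologicalSpace M]

theorem summable_mul_prod_apply (hS : ∀ x, z x ≠ 0 → x ∈ S) (f : (ι → α) → M) :
    Summable fun j => f j * ∏ i, z (j i) :=
  summable_of_ne_finset_zero (s := Fintype.piFinset fun _ => S) fun j hj => by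
    rw [prod_apply_eq_zero_of_notMem_piFinset hS hj, mul_zero]

theorem tsum_mul_prod_eq_sum (hS : ∀ x, z x ≠ 0 → x ∈ S) (f : (ι → α) → M) :
    ∑' j, f j * ∏ i, z (j i) = ∑ j ∈ Fintype.piFinset (fun _ => S), f j * ∏ i, z (j i) :=
  tsum_eq_sum fun j hj => by rw [prod_apply_eq_zero_of_notMem_piFinset hS hj, mul_zero]

theorem tsum_mul_prod_append_eq_sum {n m : ℕ} (hS : ∀ x, z x ≠ 0 → x ∈ S)
    (f : (Fin n → α) × (Fin m → α) → M) :
    ∑' J : Fin (n + m) → α, f ((Fin.appendEquiv n m).symm J) * ∏ i, z (J i) =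
      ∑ p ∈ (Fintype.piFinset fun _ => S) ×ˢ (Fintype.piFinset fun _ => S),
        f p * ((∏ q, z (p.1 q)) * ∏ q, z (p.2 q)) := by
  rw [← (Fin.appendEquiv n m).tsum_eq]
  simp only [Equiv.symm_apply_apply, Fin.appendEquiv_apply, Fin.prod_univ_add, Fin.append_left,
    Fin.append_right]
  refine tsum_eq_sum fun p hp => ?_
  rcases not_and_or.1 (mem_product.not.1 hp) with h | h <;>
    simp [prod_apply_eq_zero_of_notMem_piFinset hS h]

end FinitelySupported

theorem hasSum_ite_apply_eq_iff {α M : Type*} [DecidableEq α] [AddCommMonoid M]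
    [TopologicalSpace M] {n : ℕ} (i : Fin (n + 1)) (x : α) (g : (Fin (n + 1) → α) → M) (s : M) :
    HasSum (fun j => if j i = x then g j else 0) s ↔ HasSum (fun r => g (i.insertNth x r)) s := by
  rw [← (Fin.insertNth_right_injective (p := i) (α := fun _ => α) x).hasSum_iff]
  · simp [Function.comp_def]
  · rintro j hj
    rw [if_neg]
    rintro rfl
    exact hj ⟨i.removeNth j, Fin.insertNth_self_removeNth i j⟩

theorem prod_erase_insertNth {α M : Type*} [CommMonoid M] {n : ℕ} (f : α → M)
    (i : Fin (n + 1)) (x : α) (r : Fin n → α) :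
    ∏ i' ∈ univ.erase i, f (Fin.insertNth (α := fun _ => α) i x r i') = ∏ q, f (r q) := by
  rw [Fin.univ_succAbove n i, erase_cons, prod_map]
  simp

section Momentum

variable {d : ℕ}

noncomputable def derivCoeff {n : ℕ} (a : (Fin (n + 1) → Zidx d) → ℂ) (m : Zidx d)
    (r : Fin n → Zidx d) : ℂ :=
  ∑ i : Fin (n + 1), a (i.insertNth m r)

theorem formalDeriv_eq_tsum {n : ℕ} (a : (Fin (n + 1) → Zidx d) → ℂ) {z : Zidx d → ℂ}
    {S : Finset (Zidx d)} (hS : ∀ x, z x ≠ 0 → x ∈ S) (m : Zidx d) :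
    formalDeriv a z m = ∑' r, derivCoeff a m r * ∏ q, z (r q) := by
  classical
  have hsum : ∀ i : Fin (n + 1), HasSum
      (fun j : Fin (n + 1) → Zidx d => if j i = m then a j * ∏ i' ∈ univ.erase i, z (j i') else 0)
      (∑' r, a (i.insertNth m r) * ∏ q, z (r q)) := fun i => by
    rw [hasSum_ite_apply_eq_iff]
    simpa only [prod_erase_insertNth] using (summable_mul_prod_apply hS _).hasSum
  calc formalDeriv a z m
      = ∑' j, ∑ i, if j i = m then a j * ∏ i' ∈ univ.erase i, z (j i') else 0 := by
        simp only [formalDeriv, mul_sum, mul_ite, mul_zero]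
    _ = ∑ i : Fin (n + 1), ∑' r : Fin n → Zidx d, a (i.insertNth m r) * ∏ q, z (r q) :=
        (hasSum_sum fun i _ => hsum i).tsum_eq
    _ = ∑' r, derivCoeff a m r * ∏ q, z (r q) := by
        simp only [derivCoeff, sum_mul]
        exact (Summable.tsum_finsetSum fun i _ => summable_mul_prod_apply hS _).symm

theorem mom_insertNth {n : ℕ} (i : Fin (n + 1)) (m : Zidx d) (r : Fin n → Zidx d) :
    mom (i.insertNth m r) = (if m.2 then m.1 else -m.1) + mom r := by
  rw [mom, Fin.sum_univ_succAbove _ i]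
  simp only [Fin.insertNth_apply_same, Fin.insertNth_apply_succAbove, mom]
  split <;> simp

theorem mom_append {n m : ℕ} (r : Fin n → Zidx d) (s : Fin m → Zidx d) :
    mom (Fin.append r s) = mom r + mom s := by
  simp only [mom, Fin.sum_univ_add, Fin.append_left, Fin.append_right]

section ZeroMomentum

variable {n : ℕ} {a : (Fin (n + 1) → Zidx d) → ℂ} {c : Fin d → ℤ} {r : Fin n → Zidx d}

theorem eq_mom_of_derivCoeff_false_ne_zero (hmom : ∀ j, a j ≠ 0 → mom j = 0)
    (h : derivCoeff a (c, false) r ≠ 0) : c = mom r := by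
  obtain ⟨i, -, hi⟩ := exists_ne_zero_of_sum_ne_zero h
  have := hmom _ hi
  rw [mom_insertNth] at this
  simpa [neg_add_eq_zero] using this

theorem eq_neg_mom_of_derivCoeff_true_ne_zero (hmom : ∀ j, a j ≠ 0 → mom j = 0)
    (h : derivCoeff a (c, true) r ≠ 0) : c = -mom r := by
  obtain ⟨i, -, hi⟩ := exists_ne_zero_of_sum_ne_zero h
  have := hmom _ hi
  rw [mom_insertNth] at this
  exact eq_neg_of_add_eq_zero_left this

end ZeroMomentum

theorem norm_derivCoeff_le {n : ℕ} {a : (Fin (n + 1) → Zidx d) → ℂ} {Pn : ℝ}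
    (hbd : ∀ j, ‖a j‖ ≤ Pn) (m : Zidx d) (r : Fin n → Zidx d) :
    ‖derivCoeff a m r‖ ≤ (n + 1) * Pn :=
  calc ‖derivCoeff a m r‖ ≤ ∑ i : Fin (n + 1), ‖a (i.insertNth m r)‖ := norm_sum_le _ _
    _ ≤ ∑ _i : Fin (n + 1), Pn := sum_le_sum fun i _ => hbd _
    _ = (n + 1) * Pn := by simp

/-- The coefficient of `{P, Q}` at `z_r z_s`: by zero momentum of `P`, only `c = ℳ(r)` survives in
the `η`-`ξ` term and only `c = -ℳ(r)` in the `ξ`-`η` term. -/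
noncomputable def bracketCoeff {n m : ℕ} (a : (Fin (n + 1) → Zidx d) → ℂ)
    (b : (Fin (m + 1) → Zidx d) → ℂ) (r : Fin n → Zidx d) (s : Fin m → Zidx d) : ℂ :=
  Complex.I * (derivCoeff a (mom r, false) r * derivCoeff b (mom r, true) s -
    derivCoeff a (-mom r, true) r * derivCoeff b (-mom r, false) s)

section Bracket

variable {n m : ℕ} {a : (Fin (n + 1) → Zidx d) → ℂ} {b : (Fin (m + 1) → Zidx d) → ℂ}

theorem hasSum_bracketCoeff (hmoma : ∀ j, a j ≠ 0 → mom j = 0) (r : Fin n → Zidx d)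
    (s : Fin m → Zidx d) :
    HasSum (fun c => Complex.I * (derivCoeff a (c, false) r * derivCoeff b (c, true) s -
      derivCoeff a (c, true) r * derivCoeff b (c, false) s)) (bracketCoeff a b r s) := by
  have hη : HasSum (fun c => derivCoeff a (c, false) r * derivCoeff b (c, true) s)
      (derivCoeff a (mom r, false) r * derivCoeff b (mom r, true) s) :=
    hasSum_single _ fun c hc => by
      rw [mul_eq_zero_of_left (not_not.1 (mt (eq_mom_of_derivCoeff_false_ne_zero hmoma) hc))]
  have hξ : HasSum (fun c => derivCoeff a (c, true) r * derivCoeff b (c, false) s)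
      (derivCoeff a (-mom r, true) r * derivCoeff b (-mom r, false) s) :=
    hasSum_single _ fun c hc => by
      rw [mul_eq_zero_of_left (not_not.1 (mt (eq_neg_mom_of_derivCoeff_true_ne_zero hmoma) hc))]
  exact (hη.sub hξ).mul_left Complex.I

theorem mom_add_eq_zero_of_bracketCoeff_ne_zero (hmomb : ∀ j, b j ≠ 0 → mom j = 0)
    {r : Fin n → Zidx d} {s : Fin m → Zidx d} (h : bracketCoeff a b r s ≠ 0) :
    mom r + mom s = 0 := by
  rw [bracketCoeff, mul_ne_zero_iff, sub_ne_zero] at h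
  by_cases hξ : derivCoeff b (mom r, true) s = 0
  · have hη : derivCoeff b (-mom r, false) s ≠ 0 := by
      intro hη
      exact h.2 (by rw [hξ, hη, mul_zero, mul_zero])
    rw [← eq_mom_of_derivCoeff_false_ne_zero hmomb hη, add_neg_cancel]
  · rw [eq_neg_mom_of_derivCoeff_true_ne_zero hmomb hξ, neg_add_cancel]

theorem norm_bracketCoeff_le {Pn Qn : ℝ} (hbda : ∀ j, ‖a j‖ ≤ Pn) (hbdb : ∀ j, ‖b j‖ ≤ Qn)
    (r : Fin n → Zidx d) (s : Fin m → Zidx d) :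
    ‖bracketCoeff a b r s‖ ≤ 2 * (n + 1) * (m + 1) * Pn * Qn := by
  have hprod : ∀ e e', ‖derivCoeff a e r * derivCoeff b e' s‖ ≤ (n + 1) * Pn * ((m + 1) * Qn) :=
    fun e e' => (norm_mul_le _ _).trans <| mul_le_mul (norm_derivCoeff_le hbda e r)
      (norm_derivCoeff_le hbdb e' s) (norm_nonneg _)
      ((norm_nonneg _).trans (norm_derivCoeff_le hbda e r))
  calc ‖bracketCoeff a b r s‖
      ≤ ‖derivCoeff a (mom r, false) r * derivCoeff b (mom r, true) s‖ +
          ‖derivCoeff a (-mom r, true) r * derivCoeff b (-mom r, false) s‖ := by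
        rw [bracketCoeff, norm_mul, Complex.norm_I, one_mul]
        exact norm_sub_le _ _
    _ ≤ 2 * (n + 1) * (m + 1) * Pn * Qn := by
        have hη := hprod (mom r, false) (mom r, true)
        have hξ := hprod (-mom r, true) (-mom r, false)
        linarith

theorem poissonBracket_eq_sum (hmoma : ∀ j, a j ≠ 0 → mom j = 0) {z : Zidx d → ℂ}
    {S : Finset (Zidx d)} (hS : ∀ x, z x ≠ 0 → x ∈ S) :
    poissonBracket a b z =
      ∑ p ∈ (Fintype.piFinset fun _ : Fin n => S) ×ˢ (Fintype.piFinset fun _ : Fin m => S),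
        bracketCoeff a b p.1 p.2 * ((∏ q, z (p.1 q)) * ∏ q, z (p.2 q)) := by
  have hmul : ∀ e e', formalDeriv a z e * formalDeriv b z e' =
      ∑ p ∈ (Fintype.piFinset fun _ : Fin n => S) ×ˢ (Fintype.piFinset fun _ : Fin m => S),
        derivCoeff a e p.1 * derivCoeff b e' p.2 * ((∏ q, z (p.1 q)) * ∏ q, z (p.2 q)) := by
    intro e e'
    rw [formalDeriv_eq_tsum a hS, formalDeriv_eq_tsum b hS, tsum_mul_prod_eq_sum hS,
      tsum_mul_prod_eq_sum hS, sum_mul_sum, sum_product]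
    exact sum_congr rfl fun r _ => sum_congr rfl fun s _ => by ring
  rw [poissonBracket, ← tsum_mul_left]
  simp only [hmul, ← sum_sub_distrib, mul_sum]
  refine (hasSum_sum fun p _ => ?_).tsum_eq
  simpa only [mul_assoc, sub_mul] using
    (hasSum_bracketCoeff (b := b) hmoma p.1 p.2).mul_right ((∏ q, z (p.1 q)) * ∏ q, z (p.2 q))

end Bracket

end Momentum

theorem stmt6 (d k l : ℕ) (hk : 2 ≤ k) (hl : 2 ≤ l)
    (a : (Fin k → Zidx d) → ℂ) (b : (Fin l → Zidx d) → ℂ) (Pn Qn : ℝ)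
    (hmoma : ∀ j, a j ≠ 0 → mom j = 0) (hbda : ∀ j, ‖a j‖ ≤ Pn)
    (hmomb : ∀ j, b j ≠ 0 → mom j = 0) (hbdb : ∀ j, ‖b j‖ ≤ Qn) :
    -- {P,Q} is a homogeneous polynomial of degree k + l − 2, with
    -- zero-momentum monomials and coefficients bounded by 2 k l ‖P‖ ‖Q‖
    ∃ c : (Fin (k + l - 2) → Zidx d) → ℂ,
      (∀ j, c j ≠ 0 → mom j = 0) ∧
      (∀ j, ‖c j‖ ≤ 2 * k * l * Pn * Qn) ∧
      (∀ z : Zidx d → ℂ, {j : Zidx d | z j ≠ 0}.Finite →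
        poissonBracket a b z = ∑' j : Fin (k + l - 2) → Zidx d, c j * ∏ i, z (j i)) := by
  obtain ⟨n, rfl⟩ : ∃ n, k = n + 1 := ⟨k - 1, by omega⟩
  obtain ⟨m, rfl⟩ : ∃ m, l = m + 1 := ⟨l - 1, by omega⟩
  rw [show n + 1 + (m + 1) - 2 = n + m by omega]
  refine ⟨fun J => Function.uncurry (bracketCoeff a b) ((Fin.appendEquiv n m).symm J),
    fun J hJ => ?_, fun J => ?_, fun z hz => ?_⟩
  · rw [← (Fin.appendEquiv n m).apply_symm_apply J]
    exact (mom_append _ _).trans (mom_add_eq_zero_of_bracketCoeff_ne_zero hmomb hJ)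
  · push_cast
    exact norm_bracketCoeff_le hbda hbdb _ _
  · have hS : ∀ x, z x ≠ 0 → x ∈ hz.toFinset := fun x hx => hz.mem_toFinset.2 hx
    rw [poissonBracket_eq_sum hmoma hS, tsum_mul_prod_append_eq_sum hS]
    rfl
end
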